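/- Let μ/ν be a skew shape with no empty rows and Hessenberg function h, let θ = (N-k,1,...,1) be a hook partition of N = |μ/ν|, and define Γ^θ_{μ/ν}(w) = (n!/|C(w)|) Σ_{w' ∈ C(w)} K_{θ, μ+δ-w'(ν+δ)} and Γ_g(w) = (n!/|C(w)|) Σ_{w' ∈ C(w)} ĝ(w') for a Hessenberg function g. Then Γ^θ_{μ/ν} = Σ_{J ⊆ [n-1], |J| = k} Γ_{h^J}, where h^J(i) = h(i)-1 if i ∈ J and μ_{h(i)} - ν_i + i - h(i) = 0, else h(i). -/

import Mathlib

open Equiv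

/-- `T i j` is the entry of a filling in row `i`, column `j` (0-based);
entries outside the diagram of `shape` are `0`.  Rows weakly increase,
columns strictly increase. -/
def IsSSYT (shape : ℕ → ℕ) (T : ℕ → ℕ → ℕ) : Prop :=
  (∀ i j, j + 1 < shape i → T i j ≤ T i (j + 1)) ∧
  (∀ i j, j < shape (i + 1) → T i j < T (i + 1) j) ∧
  (∀ i j, shape i ≤ j → T i j = 0)

/-- The Kostka number: the number of semistandard Young tableaux of the given
shape in which the entry `m` appears exactly `c m` times. -/
noncomputable def kostka (shape : ℕ → ℕ) (c : ℕ → ℕ) : ℕ :=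
  Set.ncard {T : ℕ → ℕ → ℕ | IsSSYT shape T ∧
    ∀ m : ℕ, {p : ℕ × ℕ | p.2 < shape p.1 ∧ T p.1 p.2 = m}.ncard = c m}

open Classical in
/-- Kostka number for an integer content, with the convention that it is `0`
whenever the content has a negative entry. -/
noncomputable def kostkaZ (shape : ℕ → ℕ) (c : ℕ → ℤ) : ℕ :=
  if ∀ m, 0 ≤ c m then kostka shape (fun m => (c m).toNat) else 0

/-- The hook shape `(N - k, 1, ..., 1)` with `k` trailing rows of length 1. -/
def hookShape (N k : ℕ) : ℕ → ℕ :=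
  fun i => if i = 0 then N - k else if i ≤ k then 1 else 0

/-- Extend a sequence indexed by `Fin n` to all of `ℕ` by zeros. -/
def extendSeq {n : ℕ} (a : Fin n → ℤ) : ℕ → ℤ :=
  fun m => if h : m < n then a ⟨m, h⟩ else 0

/-- The staircase `δ = (n-1, n-2, ..., 1, 0)`. -/
def deltaSeq (n : ℕ) : Fin n → ℤ := fun i => (n : ℤ) - 1 - (i.val : ℤ)

/-- The sequence `μ + δ - w(ν + δ)`, where a permutation acts on sequences by
shuffling: `(w(a))_i = a_{w⁻¹(i)}`. -/
def hatSeq {n : ℕ} (μ ν : Fin n → ℕ) (w : Perm (Fin n)) : Fin n → ℤ :=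
  fun i => ((μ i : ℤ) + deltaSeq n i) - ((ν (w⁻¹ i) : ℤ) + deltaSeq n (w⁻¹ i))

/-- `h` is the Hessenberg function of the skew shape `μ/ν`:
`h j = max { i | μ i - ν j + j - i ≥ 0 }`. -/
def IsHessOf {n : ℕ} (μ ν : Fin n → ℕ) (h : Fin n → Fin n) : Prop :=
  ∀ j : Fin n, (ν j + ((h j : ℕ)) ≤ μ (h j) + (j : ℕ)) ∧
    ∀ i : Fin n, ν j + (i : ℕ) ≤ μ i + (j : ℕ) → i ≤ h j

/-- The indicator `ĥ(w)` of the condition `w(i) ≤ h(i)` for all `i`. -/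
def hhat {n : ℕ} (h : Fin n → Fin n) (w : Perm (Fin n)) : ℕ :=
  if ∀ i, w i ≤ h i then 1 else 0

/-- The modified Hessenberg function `h^J`: `h^J(i) = h(i) - 1` when `i ∈ J` and
`μ_{h(i)} - ν_i + i - h(i) = 0`, and `h^J(i) = h(i)` otherwise. -/
def hJfun {n : ℕ} (μ ν : Fin n → ℕ) (h : Fin n → Fin n) (J : Finset (Fin n)) :
    Fin n → Fin n :=
  fun i => if i ∈ J ∧ μ (h i) + (i : ℕ) = ν i + ((h i : ℕ)) then
      ⟨(h i : ℕ) - 1, Nat.lt_of_le_of_lt (Nat.sub_le _ _) (h i).isLt⟩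
    else h i

open Classical in
/-- The conjugacy class of `w` in the symmetric group, as a finset. -/
noncomputable def conjClass {n : ℕ} (w : Perm (Fin n)) : Finset (Perm (Fin n)) :=
  Finset.univ.filter (fun v => IsConj w v)

/-- The Stanley–Stembridge character
`Γ_h(w) = (n! / |C(w)|) · Σ_{w' ∈ C(w)} ĥ(w')`. -/
noncomputable def GammaH {n : ℕ} (h : Fin n → Fin n) (w : Perm (Fin n)) : ℚ :=
  ((n.factorial : ℚ) / ((conjClass w).card : ℚ)) * ∑ v ∈ conjClass w, (hhat h v : ℚ)

/-- The immanant character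
`Γ^θ_{μ/ν}(w) = (n! / |C(w)|) · Σ_{w' ∈ C(w)} K_{θ, μ+δ-w'(ν+δ)}`. -/
noncomputable def GammaTheta {n : ℕ} (shape : ℕ → ℕ) (μ ν : Fin n → ℕ)
    (w : Perm (Fin n)) : ℚ :=
  ((n.factorial : ℚ) / ((conjClass w).card : ℚ)) *
    ∑ v ∈ conjClass w, (kostkaZ shape (extendSeq (hatSeq μ ν v)) : ℚ)

/-! For fixed `w'`, the content `c = μ + δ - w'(ν + δ)` is nonnegative exactly when `w' ≤ h`
pointwise, and then it vanishes precisely at the `w'(j)` with `w'(j) = h(j)` and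
`μ_{h(j)} - ν_j + j - h(j) = 0`; call the set of these `j` `Z`. A semistandard tableau of hook
shape `(N-k,1^k)` and content `c` is determined by the `k` entries of its leg, which can be any `k`
distinct values of `c` other than the smallest one, so `K_{θ,c} = C(|supp c| - 1, k) =
C(n - 1 - |Z|, k)`. On the other side `ĥ^J(w') = 1` iff `w' ≤ h` and `J` avoids `Z`; as
`Z ⊆ [n-1]`, the number of such `J` is the same binomial coefficient. -/

open Finset

lemma List.isChain_map_range {α : Type*} {R : α → α → Prop} {f : ℕ → α} {a : ℕ} :
    ((range a).map f).IsChain R ↔ ∀ j, j + 1 < a → R (f j) (f (j + 1)) := by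
  rw [isChain_map]
  rcases a with _ | a
  · simp
  · rw [isChain_range_succ]
    exact ⟨fun h j hj => h j (by omega), fun h j hj => h j (by omega)⟩

lemma List.getD_map_range {α : Type*} (f : ℕ → α) (d : α) (a j : ℕ) :
    ((range a).map f).getD j d = if j < a then f j else d := by
  split_ifs with h <;> simp [h]

lemma List.getD_zero_le_of_mem {α : Type*} [Preorder α] {l : List α} (hl : l.Pairwise (· ≤ ·))
    (d : α) {a : α} (ha : a ∈ l) : l.getD 0 d ≤ a := by
  cases l with
  | nil => simp at ha
  | cons b l =>
    rcases mem_cons.1 ha with rfl | ha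
    exacts [le_rfl, rel_of_pairwise_cons hl ha]

lemma Finset.filter_disjoint_powersetCard {α : Type*} [DecidableEq α] (s t : Finset α) (k : ℕ) :
    (powersetCard k s).filter (Disjoint · t) = powersetCard k (s \ t) := by
  ext J
  simp only [mem_filter, mem_powersetCard, subset_sdiff]
  tauto

def hookRow (a : ℕ) (T : ℕ → ℕ → ℕ) : List ℕ := (List.range a).map (T 0)

def hookLeg (k : ℕ) (T : ℕ → ℕ → ℕ) : List ℕ := (List.range k).map fun i => T (i + 1) 0

def hookTableau (row leg : List ℕ) : ℕ → ℕ → ℕ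
  | 0, j => row.getD j 0
  | i + 1, 0 => leg.getD i 0
  | _ + 1, _ + 1 => 0

lemma lt_hookShape_iff {N k i j : ℕ} :
    j < hookShape N k i ↔ i = 0 ∧ j < N - k ∨ 0 < i ∧ i ≤ k ∧ j = 0 := by
  unfold hookShape
  split_ifs <;> omega

lemma hookRow_hookTableau (row leg : List ℕ) :
    hookRow row.length (hookTableau row leg) = row :=
  List.ext_getElem (by simp [hookRow]) fun j _ hj => by simp [hookRow, hookTableau, hj]

lemma hookLeg_hookTableau (row leg : List ℕ) :
    hookLeg leg.length (hookTableau row leg) = leg :=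
  List.ext_getElem (by simp [hookLeg]) fun j _ hj => by simp [hookLeg, hookTableau, hj]

lemma hookTableau_hookRow_hookLeg {N k : ℕ} {T : ℕ → ℕ → ℕ}
    (hT : ∀ i j, hookShape N k i ≤ j → T i j = 0) :
    hookTableau (hookRow (N - k) T) (hookLeg k T) = T := by
  funext i j
  have hT' := fun i j (h : ¬ j < hookShape N k i) => hT i j (not_lt.1 h)
  simp only [lt_hookShape_iff] at hT'
  rcases i with _ | i <;> rcases j with _ | j <;>
    simp only [hookTableau, hookRow, hookLeg, List.getD_map_range] <;> grind

lemma hookTableau_eq_zero_of_hookShape_le {N k i j : ℕ} {row leg : List ℕ}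
    (hrow : row.length = N - k) (hleg : leg.length = k) (h : hookShape N k i ≤ j) :
    hookTableau row leg i j = 0 := by
  rw [← not_lt, lt_hookShape_iff] at h
  rcases i with _ | i <;> rcases j with _ | j <;> simp only [hookTableau] <;>
    exact List.getD_eq_default _ _ (by omega)

lemma isSSYT_hookShape_iff {N k : ℕ} {T : ℕ → ℕ → ℕ} :
    IsSSYT (hookShape N k) T ↔ (hookRow (N - k) T).Pairwise (· ≤ ·) ∧
      (T 0 0 :: hookLeg k T).Pairwise (· < ·) ∧ ∀ i j, hookShape N k i ≤ j → T i j = 0 := by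
  have hcol : T 0 0 :: hookLeg k T = (List.range (k + 1)).map (T · 0) := by
    simp [hookLeg, List.range_succ_eq_map]
  rw [hcol, hookRow, ← List.isChain_iff_pairwise, ← List.isChain_iff_pairwise,
    List.isChain_map_range, List.isChain_map_range, IsSSYT]
  refine and_congr ⟨fun h j hj => h 0 j (lt_hookShape_iff.2 (.inl ⟨rfl, hj⟩)), fun h i j hj => ?_⟩
    (and_congr_left fun _ => ⟨fun h i hi => h i 0 ?_, fun h i j hj => ?_⟩)
  · rcases lt_hookShape_iff.1 hj with ⟨rfl, hj⟩ | ⟨-, -, hj⟩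
    exacts [h j hj, by omega]
  · exact lt_hookShape_iff.2 (.inr ⟨by omega, by omega, rfl⟩)
  · obtain ⟨-, hi, rfl⟩ := (lt_hookShape_iff.1 hj).resolve_left (by omega)
    exact h i (by omega)

lemma ncard_hookShape_eq_count (N k m : ℕ) (T : ℕ → ℕ → ℕ) :
    {p : ℕ × ℕ | p.2 < hookShape N k p.1 ∧ T p.1 p.2 = m}.ncard =
      Multiset.count m ↑(hookRow (N - k) T ++ hookLeg k T) := by
  let cells : Finset (ℕ × ℕ) :=
    ((range (N - k)).map (.sectR 0 ℕ)).disjUnion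
      ((range k).map ((addRightEmbedding 1).trans (.sectL ℕ 0))) (by simp [disjoint_left])
  have hcells : {p : ℕ × ℕ | p.2 < hookShape N k p.1 ∧ T p.1 p.2 = m} =
      ↑(cells.filter fun p => m = T p.1 p.2) := by
    ext ⟨i, j⟩
    rcases i with _ | i <;> simp [cells, lt_hookShape_iff, eq_comm (a := m), eq_comm (a := 0)]
  rw [hcells, Set.ncard_coe_finset, ← card_val, filter_val, ← Multiset.count_map]
  congr 1
  change Multiset.map _ (_ + _) = _
  simp only [map_val, Multiset.map_map, Multiset.map_add, range_val, hookRow, hookLeg,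
    ← Multiset.coe_add]
  rfl

section KostkaHook

noncomputable def hookFill (M : Multiset ℕ) (K : Finset ℕ) : ℕ → ℕ → ℕ :=
  hookTableau ((M - K.val).sort (· ≤ ·)) (K.sort (· ≤ ·))

variable {M : Multiset ℕ} {K : Finset ℕ} {k : ℕ}

lemma hookFill_spec (hKM : K.val ≤ M) (hK : #K = k) :
    hookRow (Multiset.card M - k) (hookFill M K) = (M - K.val).sort (· ≤ ·) ∧
      hookLeg k (hookFill M K) = K.sort (· ≤ ·) := by
  have hrow : ((M - K.val).sort (· ≤ ·)).length = Multiset.card M - k := by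
    rw [Multiset.length_sort, Multiset.card_sub hKM, card_val, hK]
  have hleg : (K.sort (· ≤ ·)).length = k := by rw [length_sort, hK]
  exact ⟨hrow ▸ hookRow_hookTableau _ _, hleg ▸ hookLeg_hookTableau _ _⟩

lemma isSSYT_hookFill {m₀ : ℕ} (hm₀ : m₀ ∈ M) (hKM : K.val ≤ M) (hlt : ∀ x ∈ K, m₀ < x)
    (hK : #K = k) :
    IsSSYT (hookShape (Multiset.card M) k) (hookFill M K) ∧
      ∀ m, {p : ℕ × ℕ | p.2 < hookShape (Multiset.card M) k p.1 ∧
        hookFill M K p.1 p.2 = m}.ncard = M.count m := by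
  obtain ⟨hrow, hleg⟩ := hookFill_spec hKM hK
  refine ⟨isSSYT_hookShape_iff.2 ⟨hrow ▸ Multiset.pairwise_sort _ _, ?_, fun i j hij => ?_⟩,
    fun m => ?_⟩
  · have hm₀K : m₀ ∉ K := fun h => (hlt m₀ h).false
    have hcorner : hookFill M K 0 0 ≤ m₀ :=
      List.getD_zero_le_of_mem (Multiset.pairwise_sort _ _) 0 <| (Multiset.mem_sort _).2 <|
        Multiset.mem_sub.2 (by simpa [hm₀K] using Multiset.count_pos.2 hm₀)
    rw [hleg, List.pairwise_cons]
    exact ⟨fun x hx => hcorner.trans_lt (hlt x ((mem_sort _).1 hx)),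
      (sortedLT_sort K).pairwise⟩
  · apply hookTableau_eq_zero_of_hookShape_le _ _ hij
    · simpa [hookRow] using (congrArg List.length hrow).symm
    · simpa [hookLeg] using (congrArg List.length hleg).symm
  · rw [ncard_hookShape_eq_count, hrow, hleg, ← Multiset.coe_add, Multiset.sort_eq, sort_eq,
      tsub_add_cancel_of_le hKM]

lemma exists_hookFill_eq_of_isSSYT {m₀ : ℕ} (hm₀ : ∀ m ∈ M, m₀ ≤ m) (hk : k < Multiset.card M)
    {T : ℕ → ℕ → ℕ} (hT : IsSSYT (hookShape (Multiset.card M) k) T)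
    (hc : ∀ m, {p : ℕ × ℕ | p.2 < hookShape (Multiset.card M) k p.1 ∧ T p.1 p.2 = m}.ncard =
      M.count m) :
    ∃ K ∈ powersetCard k (M.toFinset.erase m₀), hookFill M K = T := by
  obtain ⟨hrow, hcol, hout⟩ := isSSYT_hookShape_iff.1 hT
  obtain ⟨hcorner, hleg⟩ := List.pairwise_cons.1 hcol
  have hM : (hookRow (Multiset.card M - k) T : Multiset ℕ) + hookLeg k T = M := by
    rw [Multiset.coe_add]
    exact Multiset.ext.2 fun m => (ncard_hookShape_eq_count _ _ m T).symm.trans (hc m)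
  set K := (hookLeg k T).toFinset
  have hsort : K.sort (· ≤ ·) = hookLeg k T :=
    (List.toFinset_sort _ hleg.nodup).2 (hleg.imp le_of_lt)
  have hT₀₀ : T 0 0 ∈ M :=
    hM ▸ Multiset.mem_add.2 (.inl (by simpa [hookRow] using ⟨0, by omega, rfl⟩))
  refine ⟨K, mem_powersetCard.2 ⟨fun x hx => ?_, ?_⟩, ?_⟩
  · have hx : x ∈ hookLeg k T := List.mem_toFinset.1 hx
    exact mem_erase.2 ⟨((hm₀ _ hT₀₀).trans_lt (hcorner x hx)).ne',
      Multiset.mem_toFinset.2 (hM ▸ Multiset.mem_add.2 (.inr hx))⟩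
  · rw [← length_sort (· ≤ ·), hsort]
    simp [hookLeg]
  · rw [hookFill, hsort, ← sort_eq K (· ≤ ·), hsort, ← hM, add_tsub_cancel_right,
      Multiset.coe_sort, List.mergeSort_eq_self _ hrow]
    exact hookTableau_hookRow_hookLeg hout

theorem kostka_hookShape (M : Multiset ℕ) {k : ℕ} (hk : k < Multiset.card M) :
    kostka (hookShape (Multiset.card M) k) (M.count ·) = (#M.toFinset - 1).choose k := by
  have hM : M.toFinset.Nonempty := by
    rw [Multiset.toFinset_nonempty, ← Multiset.card_pos]
    omega
  set m₀ := M.toFinset.min' hM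
  have hm₀ : m₀ ∈ M.toFinset := M.toFinset.min'_mem hM
  have hP : ∀ K ∈ powersetCard k (M.toFinset.erase m₀),
      K.val ≤ M ∧ (∀ x ∈ K, m₀ < x) ∧ #K = k := by
    intro K hK
    obtain ⟨hsub, hK⟩ := mem_powersetCard.1 hK
    refine ⟨val_le_iff_val_subset.2 fun x hx => ?_, fun x hx => ?_, hK⟩
    · exact Multiset.mem_toFinset.1 (mem_of_mem_erase (hsub hx))
    · obtain ⟨hx₀, hxM⟩ := mem_erase.1 (hsub hx)
      exact (M.toFinset.min'_le x hxM).lt_of_ne hx₀.symm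
  rw [← card_erase_of_mem hm₀, ← card_powersetCard, ← Set.ncard_coe_finset, kostka]
  symm
  refine Set.ncard_congr (fun K _ => hookFill M K) (fun K hK => ?_) (fun K₁ K₂ hK₁ hK₂ h => ?_)
    (fun T ⟨hT, hc⟩ => ?_)
  · obtain ⟨hKM, hlt, hK⟩ := hP K hK
    exact isSSYT_hookFill (Multiset.mem_toFinset.1 hm₀) hKM hlt hK
  · obtain ⟨hKM₁, -, hK₁⟩ := hP K₁ hK₁
    obtain ⟨hKM₂, -, hK₂⟩ := hP K₂ hK₂
    have h₁ := (hookFill_spec hKM₁ hK₁).2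
    have h₂ := (hookFill_spec hKM₂ hK₂).2
    rw [← h, h₁] at h₂
    simpa using congrArg List.toFinset h₂
  · obtain ⟨K, hK, rfl⟩ := exists_hookFill_eq_of_isSSYT (m₀ := m₀)
      (fun m hm => M.toFinset.min'_le m (Multiset.mem_toFinset.2 hm)) hk hT hc
    exact ⟨K, hK, rfl⟩

end KostkaHook

lemma kostkaZ_hookShape_extendSeq {n N k : ℕ} (a : Fin n → ℤ) (ha : ∀ i, 0 ≤ a i)
    (hsum : ∑ i, a i = N) (hk : k < N) :
    kostkaZ (hookShape N k) (extendSeq a) = (#{i | a i ≠ 0} - 1).choose k := by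
  let M : Multiset ℕ := ∑ i, Multiset.replicate (a i).toNat (i : ℕ)
  have hcount : (fun m => (extendSeq a m).toNat) = (M.count ·) := by
    funext m
    simp only [M, Multiset.count_sum', Multiset.count_replicate, extendSeq]
    split_ifs with hm
    · rw [sum_eq_single ⟨m, hm⟩ (fun i _ hi => if_neg fun h => hi (Fin.ext h)) (by simp),
        if_pos rfl]
    · exact (sum_eq_zero fun i _ => if_neg (by omega)).symm
  have hcard : Multiset.card M = N := by
    have : (∑ i, (a i).toNat : ℤ) = N := by
      rw [← hsum]
      exact sum_congr rfl fun i _ => Int.toNat_of_nonneg (ha i)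
    simp only [M, Multiset.card_sum, Multiset.card_replicate]
    exact_mod_cast this
  have hsupp : M.toFinset = ({i | a i ≠ 0} : Finset (Fin n)).map Fin.valEmbedding := by
    ext m
    simp [M, Multiset.mem_sum, Multiset.mem_replicate, (ha _).lt_iff_ne', eq_comm]
  rw [kostkaZ, if_pos fun m => by unfold extendSeq; split_ifs <;> simp [ha], hcount, ← hcard,
    kostka_hookShape M (hcard ▸ hk), hsupp, card_map]

lemma kostkaZ_extendSeq_of_neg {n : ℕ} (shape : ℕ → ℕ) {a : Fin n → ℤ} {i : Fin n}
    (hi : a i < 0) : kostkaZ shape (extendSeq a) = 0 := by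
  rw [kostkaZ, if_neg]
  intro h
  have := h i
  simp only [extendSeq, i.isLt, dite_true, Fin.eta] at this
  omega

section Hessenberg

variable {n : ℕ} {μ ν : Fin n → ℕ} {h : Fin n → Fin n}

lemma IsHessOf.le_iff (hh : IsHessOf μ ν h) (hμ : Antitone μ) {i j : Fin n} :
    ν j + (i : ℕ) ≤ μ i + j ↔ i ≤ h j := by
  refine ⟨(hh j).2 i, fun hij => ?_⟩
  have := (hh j).1
  have := hμ hij
  have : (i : ℕ) ≤ h j := hij
  omega

lemma IsHessOf.eq_iff (hh : IsHessOf μ ν h) (hμ : Antitone μ) {i j : Fin n} :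
    ν j + (i : ℕ) = μ i + j ↔ i = h j ∧ μ (h j) + (j : ℕ) = ν j + h j := by
  refine ⟨fun hij => ?_, fun ⟨hi, hj⟩ => by subst hi; omega⟩
  rcases ((hh.le_iff hμ).1 hij.le).lt_or_eq with hlt | rfl
  · have := (hh j).1
    have := hμ hlt.le
    have : (i : ℕ) < h j := hlt
    omega
  · exact ⟨rfl, by omega⟩

lemma IsHessOf.lt_apply_of_add_eq (hh : IsHessOf μ ν h) (hlt : ∀ i, ν i < μ i) {i : Fin n}
    (hi : μ (h i) + (i : ℕ) = ν i + h i) : i < h i := by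
  refine ((hh i).2 i (by have := hlt i; omega)).lt_of_ne fun heq => ?_
  rw [← heq] at hi
  have := hlt i
  omega

lemma hatSeq_apply_apply (μ ν : Fin n → ℕ) (v : Perm (Fin n)) (j : Fin n) :
    hatSeq μ ν v (v j) = ((μ (v j) + j : ℕ) : ℤ) - ((ν j + v j : ℕ) : ℤ) := by
  simp only [hatSeq, deltaSeq, Perm.coe_inv, symm_apply_apply]
  push_cast
  ring

lemma sum_hatSeq (μ ν : Fin n → ℕ) (v : Perm (Fin n)) :
    ∑ i, hatSeq μ ν v i = ∑ i, ((μ i : ℤ) - ν i) := by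
  simp only [hatSeq, sum_sub_distrib]
  rw [Equiv.sum_comp v⁻¹ fun i => (ν i : ℤ) + deltaSeq n i]
  simp only [sum_add_distrib]
  ring

lemma hatSeq_nonneg_iff (hh : IsHessOf μ ν h) (hμ : Antitone μ) (v : Perm (Fin n)) :
    (∀ i, 0 ≤ hatSeq μ ν v i) ↔ ∀ j, v j ≤ h j := by
  rw [← v.forall_congr_right]
  refine forall_congr' fun j => ?_
  rw [hatSeq_apply_apply, ← hh.le_iff hμ]
  omega

/-- When `h` is the Hessenberg function of `μ/ν` and `μ` is antitone, these are the `j` such that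
`μ + δ - v(ν + δ)` vanishes at `v j` (see `card_hatSeq_ne_zero`). -/
def contentZeroSet (μ ν : Fin n → ℕ) (h : Fin n → Fin n) (v : Perm (Fin n)) : Finset (Fin n) :=
  {j | v j = h j ∧ μ (h j) + (j : ℕ) = ν j + h j}

lemma card_hatSeq_ne_zero (hh : IsHessOf μ ν h) (hμ : Antitone μ) (v : Perm (Fin n)) :
    #{i | hatSeq μ ν v i ≠ 0} = n - #(contentZeroSet μ ν h v) := by
  have hzero : ({i | hatSeq μ ν v i = 0} : Finset (Fin n)) =
      (contentZeroSet μ ν h v).map v.toEmbedding := by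
    ext i
    obtain ⟨j, rfl⟩ := v.surjective i
    simp only [mem_filter, mem_univ, true_and, mem_map_equiv, symm_apply_apply, contentZeroSet,
      hatSeq_apply_apply, sub_eq_zero, Nat.cast_inj]
    rw [← hh.eq_iff hμ]
    omega
  have := card_filter_add_card_filter_not (s := univ) (fun i => hatSeq μ ν v i = 0)
  rw [hzero, card_map, card_univ, Fintype.card_fin] at this
  simp only [ne_eq]
  omega

lemma forall_le_hJfun_iff {J : Finset (Fin n)} {v : Perm (Fin n)}
    (hpos : ∀ i, μ (h i) + (i : ℕ) = ν i + h i → 0 < (h i : ℕ)) :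
    (∀ i, v i ≤ hJfun μ ν h J i) ↔ (∀ i, v i ≤ h i) ∧ Disjoint J (contentZeroSet μ ν h v) := by
  have key : ∀ i, v i ≤ hJfun μ ν h J i ↔
      v i ≤ h i ∧ (i ∈ J → ¬ (v i = h i ∧ μ (h i) + (i : ℕ) = ν i + h i)) := by
    intro i
    unfold hJfun
    split_ifs with hc
    · have := hpos i hc.2
      simp only [Fin.le_def, Fin.ext_iff, hc, true_implies, not_and, not_true_eq_false,
        imp_false]
      omega
    · tauto
  simp only [key, forall_and, disjoint_left, contentZeroSet, mem_filter, mem_univ, true_and]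

lemma filter_forall_lt_card_eq_powersetCard (n k : ℕ) :
    univ.filter (fun J : Finset (Fin n) => (∀ i ∈ J, (i : ℕ) < n - 1) ∧ J.card = k) =
      powersetCard k ({i | (i : ℕ) < n - 1} : Finset (Fin n)) := by
  ext J
  simp [subset_iff]

lemma sum_hhat_hJfun {k : ℕ} (v : Perm (Fin n))
    (hpos : ∀ i, μ (h i) + (i : ℕ) = ν i + h i → 0 < (h i : ℕ))
    (hZ : ∀ j ∈ contentZeroSet μ ν h v, (j : ℕ) < n - 1) :
    ∑ J ∈ powersetCard k ({i | (i : ℕ) < n - 1} : Finset (Fin n)), hhat (hJfun μ ν h J) v =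
      if ∀ i, v i ≤ h i then (n - 1 - #(contentZeroSet μ ν h v)).choose k else 0 := by
  have hZU : contentZeroSet μ ν h v ⊆ ({i | (i : ℕ) < n - 1} : Finset (Fin n)) := fun j hj => by
    simpa using hZ j hj
  simp only [hhat, forall_le_hJfun_iff hpos]
  split_ifs with hv
  · simp only [hv, implies_true, true_and]
    rw [sum_boole, Nat.cast_id, filter_disjoint_powersetCard, card_powersetCard,
      card_sdiff_of_subset hZU, Fin.card_filter_val_lt]
    congr 1
    omega
  · simp [hv]

theorem kostkaZ_hatSeq_eq_sum_hhat_hJfun {N k : ℕ} (hh : IsHessOf μ ν h) (hμ : Antitone μ)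
    (hlt : ∀ i, ν i < μ i) (hN : N = ∑ i, (μ i - ν i)) (hk : k < N) (v : Perm (Fin n)) :
    kostkaZ (hookShape N k) (extendSeq (hatSeq μ ν v)) =
      ∑ J ∈ powersetCard k ({i | (i : ℕ) < n - 1} : Finset (Fin n)), hhat (hJfun μ ν h J) v := by
  have hpos : ∀ i, μ (h i) + (i : ℕ) = ν i + h i → 0 < (h i : ℕ) := fun i hi =>
    (Nat.zero_le _).trans_lt (hh.lt_apply_of_add_eq hlt hi)
  have hZ : ∀ j ∈ contentZeroSet μ ν h v, (j : ℕ) < n - 1 := fun j hj => by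
    have : (j : ℕ) < h j := hh.lt_apply_of_add_eq hlt (mem_filter.1 hj).2.2
    omega
  rw [sum_hhat_hJfun v hpos hZ]
  split_ifs with hv
  · have hsum : ∑ i, hatSeq μ ν v i = N := by
      rw [sum_hatSeq, hN, Nat.cast_sum]
      exact sum_congr rfl fun i _ => (Nat.cast_sub (hlt i).le).symm
    rw [kostkaZ_hookShape_extendSeq _ ((hatSeq_nonneg_iff hh hμ v).2 hv) hsum hk,
      card_hatSeq_ne_zero hh hμ]
    congr 1
    omega
  · obtain ⟨i, hi⟩ := not_forall.1 (mt (hatSeq_nonneg_iff hh hμ v).1 hv)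
    exact kostkaZ_extendSeq_of_neg _ (not_le.1 hi)

end Hessenberg

theorem stmt9_general {n N k : ℕ} (μ ν : Fin n → ℕ) (hμ : Antitone μ)
    (hlt : ∀ i, ν i < μ i) (hN : N = ∑ i : Fin n, (μ i - ν i)) (hk : k < N)
    (h : Fin n → Fin n) (hh : IsHessOf μ ν h) (w : Perm (Fin n)) :
    GammaTheta (hookShape N k) μ ν w =
      ∑ J ∈ Finset.univ.filter (fun J : Finset (Fin n) =>
          (∀ i ∈ J, (i : ℕ) < n - 1) ∧ J.card = k),
        GammaH (hJfun μ ν h J) w := by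
  simp only [GammaTheta, GammaH, filter_forall_lt_card_eq_powersetCard, ← mul_sum]
  rw [sum_comm]
  congr 1
  refine sum_congr rfl fun v _ => ?_
  rw [kostkaZ_hatSeq_eq_sum_hhat_hJfun hh hμ hlt hN hk v, Nat.cast_sum]

/-- Corollary 4.3, first part: for a hook `θ = (N-k,1,...,1)`,
`Γ^θ_{μ/ν} = Σ_{J ⊆ [n-1], |J| = k} Γ_{h^J}`. -/
theorem stmt9 {n N k : ℕ} (μ ν : Fin n → ℕ) (hμ : Antitone μ) (hν : Antitone ν)
    (hlt : ∀ i, ν i < μ i) (hN : N = ∑ i : Fin n, (μ i - ν i)) (hk : k < N)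
    (h : Fin n → Fin n) (hh : IsHessOf μ ν h) (w : Perm (Fin n)) :
    GammaTheta (hookShape N k) μ ν w =
      ∑ J ∈ Finset.univ.filter (fun J : Finset (Fin n) =>
          (∀ i ∈ J, (i : ℕ) < n - 1) ∧ J.card = k),
        GammaH (hJfun μ ν h J) w :=
  stmt9_general μ ν hμ hlt hN hk h hh w
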